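/- For every integer n ≥ 3, the fan F_n = P_{n+1} ∨ K₁ satisfies η(F_n) = 2. -/

import Mathlib

open Classical in
/-- Sum of the labels `f` over the open neighborhood of `v` in `G`. -/
noncomputable def nbrSum {V : Type*} [Fintype V] (G : SimpleGraph V) (f : V → ℕ) (v : V) : ℕ :=
  ∑ w ∈ Finset.univ.filter (fun w => G.Adj v w), f w

open Classical in
/-- The degree of `v` in `G`. -/
noncomputable def deg {V : Type*} [Fintype V] (G : SimpleGraph V) (v : V) : ℕ :=
  (Finset.univ.filter (fun w => G.Adj v w)).card

/-- `f : V → {1,…,k}` is an additive `k`-coloring of `G`: labels lie in `{1,…,k}` and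
adjacent vertices get distinct open-neighborhood sums. -/
def IsAdditiveColoring {V : Type*} [Fintype V] (G : SimpleGraph V) (k : ℕ) (f : V → ℕ) : Prop :=
  (∀ v, 1 ≤ f v ∧ f v ≤ k) ∧ ∀ u v, G.Adj u v → nbrSum G f u ≠ nbrSum G f v

/-- The additive chromatic number `η(G)`: the least `k` admitting an additive `k`-coloring. -/
noncomputable def eta {V : Type*} [Fintype V] (G : SimpleGraph V) : ℕ :=
  sInf {k | ∃ f : V → ℕ, IsAdditiveColoring G k f}

/-- The join `G ∨ K_q` of `G` with the complete graph on `q` vertices. -/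
def joinK {α : Type*} (G : SimpleGraph α) (q : ℕ) : SimpleGraph (α ⊕ Fin q) where
  Adj x y :=
    match x, y with
    | Sum.inl u, Sum.inl v => G.Adj u v
    | Sum.inr i, Sum.inr j => i ≠ j
    | Sum.inl _, Sum.inr _ => True
    | Sum.inr _, Sum.inl _ => True
  symm := by
    constructor
    rintro (u | i) (v | j) h
    · exact G.adj_symm h
    · trivial
    · trivial
    · exact Ne.symm h
  loopless := by
    constructor
    rintro (u | i) h
    · exact G.irrefl h
    · exact h rfl

/-!
With all labels equal to 1 the neighbourhood sums are the degrees, and the path vertices 1 and 2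
both have degree 3 in `F_n`, so `η(F_n) ≥ 2`. For `η(F_n) ≤ 2`, give the hub label 1 and the path
label 1 except for a 2 on every fourth vertex: the neighbourhood sums of path vertices are then at
most 4 and alternate along the path, while the hub's sum is at least `n + 2 ≥ 5`.
-/

open SimpleGraph Finset

section

variable {V : Type*} [Fintype V] {G : SimpleGraph V}

open Classical in
lemma nbrSum_eq_sum_ite (G : SimpleGraph V) (f : V → ℕ) (v : V) :
    nbrSum G f v = ∑ w, if G.Adj v w then f w else 0 := by
  rw [nbrSum, sum_filter]

lemma nbrSum_one (G : SimpleGraph V) (v : V) : nbrSum G 1 v = deg G v := by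
  simp [nbrSum, deg]

lemma IsAdditiveColoring.deg_ne {f : V → ℕ} (hf : IsAdditiveColoring G 1 f) {u v : V}
    (huv : G.Adj u v) : deg G u ≠ deg G v := by
  have hf1 : f = 1 := funext fun w => by have := hf.1 w; simp only [Pi.one_apply]; omega
  rw [← nbrSum_one, ← nbrSum_one, ← hf1]
  exact hf.2 u v huv

lemma eta_eq_two_of_deg_eq {f : V → ℕ} (hf : IsAdditiveColoring G 2 f) {u v : V}
    (huv : G.Adj u v) (hdeg : deg G u = deg G v) : eta G = 2 := by
  refine le_antisymm (Nat.sInf_le ⟨f, hf⟩) (le_csInf ⟨2, f, hf⟩ ?_)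
  rintro k ⟨g, hg⟩
  by_contra! hk
  interval_cases k
  · have := hg.1 u; omega
  · exact hg.deg_ne huv hdeg

end

section

variable {α : Type*} [Fintype α]

lemma nbrSum_joinK_inl (G : SimpleGraph α) (q : ℕ) (f : α ⊕ Fin q → ℕ) (u : α) :
    nbrSum (joinK G q) f (Sum.inl u) = nbrSum G (f ∘ Sum.inl) u + ∑ j, f (Sum.inr j) := by
  simp [nbrSum_eq_sum_ite, Fintype.sum_sum_type, joinK]

lemma nbrSum_joinK_one_inr (G : SimpleGraph α) (f : α ⊕ Fin 1 → ℕ) (j : Fin 1) :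
    nbrSum (joinK G 1) f (Sum.inr j) = ∑ u, f (Sum.inl u) := by
  obtain rfl := Subsingleton.elim j 0
  simp [nbrSum_eq_sum_ite, Fintype.sum_sum_type, joinK]

lemma deg_joinK_inl (G : SimpleGraph α) (q : ℕ) (u : α) :
    deg (joinK G q) (Sum.inl u) = deg G u + q := by
  simp [← nbrSum_one, nbrSum_joinK_inl]

lemma isAdditiveColoring_joinK_one {G : SimpleGraph α} {k : ℕ} {g : α → ℕ}
    (hg : IsAdditiveColoring G k g) (hk : 1 ≤ k) (hhub : ∀ u, nbrSum G g u + 1 ≠ ∑ v, g v) :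
    IsAdditiveColoring (joinK G 1) k (Sum.elim g 1) := by
  refine ⟨?_, ?_⟩
  · rintro (u | j)
    exacts [hg.1 u, ⟨le_rfl, hk⟩]
  · have hl (u : α) : nbrSum (joinK G 1) (Sum.elim g 1) (Sum.inl u) = nbrSum G g u + 1 := by
      simp [nbrSum_joinK_inl]
    have hr (j : Fin 1) : nbrSum (joinK G 1) (Sum.elim g 1) (Sum.inr j) = ∑ v, g v := by
      simp [nbrSum_joinK_one_inr]
    rintro (u | i) (v | j) huv
    · simpa [hl] using hg.2 u v huv
    · simpa [hl, hr] using hhub u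
    · simpa [hl, hr] using (hhub v).symm
    · exact absurd (Subsingleton.elim i j) huv

end

lemma nbrSum_pathGraph (n : ℕ) (c : ℕ → ℕ) (i : Fin (n + 1)) :
    nbrSum (pathGraph (n + 1)) (fun j => c j) i =
      (if 0 < (i : ℕ) then c (i - 1) else 0) + (if (i : ℕ) < n then c (i + 1) else 0) := by
  rw [nbrSum_eq_sum_ite]
  simp_rw [pathGraph_adj]
  rw [Fin.sum_univ_eq_sum_range (fun j => if (i : ℕ) + 1 = j ∨ j + 1 = i then c j else 0)]
  have hsplit (j : ℕ) : (if (i : ℕ) + 1 = j ∨ j + 1 = i then c j else 0) =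
      (if (i : ℕ) + 1 = j then c j else 0) + (if j + 1 = i then c j else 0) := by
    split_ifs <;> omega
  simp only [hsplit, sum_add_distrib, sum_ite_eq, mem_range, add_lt_add_iff_right]
  rw [add_comm]
  congr 1
  obtain ⟨_ | m, hm⟩ := i
  · simp
  · simp [sum_ite_eq', show m < n + 1 by omega]

lemma deg_pathGraph_of_pos_of_lt {n : ℕ} {i : Fin (n + 1)} (h0 : 0 < (i : ℕ))
    (hn : (i : ℕ) < n) :
    deg (pathGraph (n + 1)) i = 2 := by
  rw [← nbrSum_one]
  exact (nbrSum_pathGraph n (fun _ => 1) i).trans (by simp [h0, hn])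

/-- The 2s sit four apart, so the path-neighbourhood sums of interior vertices alternate between
2 and 3; the phase is chosen so that the edge at the far end of the path is also proper. -/
def pathLabel (n i : ℕ) : ℕ := if i % 4 = (if n % 4 = 3 then 3 else 2) then 2 else 1

lemma one_le_pathLabel (n i : ℕ) : 1 ≤ pathLabel n i := by
  unfold pathLabel; split_ifs <;> omega

lemma pathLabel_le_two (n i : ℕ) : pathLabel n i ≤ 2 := by
  unfold pathLabel; split_ifs <;> omega

lemma isAdditiveColoring_pathLabel {n : ℕ} (hn : 2 ≤ n) :
    IsAdditiveColoring (pathGraph (n + 1)) 2 (fun i => pathLabel n i) := by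
  refine ⟨fun i => ⟨one_le_pathLabel n i, pathLabel_le_two n i⟩, ?_⟩
  intro u v huv
  rw [pathGraph_adj] at huv
  rw [nbrSum_pathGraph, nbrSum_pathGraph]
  unfold pathLabel
  split_ifs <;> omega

lemma nbrSum_pathLabel_le (n : ℕ) (i : Fin (n + 1)) :
    nbrSum (pathGraph (n + 1)) (fun j => pathLabel n j) i ≤ 3 := by
  rw [nbrSum_pathGraph]
  unfold pathLabel
  split_ifs <;> omega

lemma add_two_le_sum_pathLabel {n : ℕ} (hn : 2 ≤ n) :
    n + 2 ≤ ∑ i : Fin (n + 1), pathLabel n i := by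
  obtain ⟨r, hr, hlabel⟩ : ∃ r < n + 1, pathLabel n r = 2 := by
    refine ⟨if n % 4 = 3 then 3 else 2, by split_ifs <;> omega, ?_⟩
    unfold pathLabel
    rw [if_pos]
    split_ifs <;> rfl
  have hlt : ∑ _i : Fin (n + 1), 1 < ∑ i : Fin (n + 1), pathLabel n i :=
    sum_lt_sum (fun i _ => one_le_pathLabel n i) ⟨⟨r, hr⟩, mem_univ _, by simp [hlabel]⟩
  simp only [sum_const, card_univ, Fintype.card_fin, smul_eq_mul, mul_one] at hlt
  omega

/-- For `n ≥ 3`, the fan `F_n = P_{n+1} ∨ K₁` satisfies `η(F_n) = 2`. -/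
theorem eta_fan (n : ℕ) (hn : 3 ≤ n) :
    eta (joinK (SimpleGraph.pathGraph (n + 1)) 1) = 2 := by
  have hcol := isAdditiveColoring_joinK_one (isAdditiveColoring_pathLabel (n := n) (by omega))
    one_le_two fun u => by
      have := nbrSum_pathLabel_le n u
      have := add_two_le_sum_pathLabel (n := n) (by omega)
      omega
  have hadj : (joinK (pathGraph (n + 1)) 1).Adj (.inl ⟨1, by omega⟩) (.inl ⟨2, by omega⟩) := by
    simp [joinK, pathGraph_adj]
  refine eta_eq_two_of_deg_eq hcol hadj ?_
  rw [deg_joinK_inl, deg_joinK_inl, deg_pathGraph_of_pos_of_lt, deg_pathGraph_of_pos_of_lt] <;>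
    simp only <;> omega
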